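/- arXiv:1212.1616 — 5 statements merged into one kernel-verified Lean document; each statement's English description precedes it below -/
import Mathlib

section
/- Let X be a compact metric space, T : X → X a homeomorphism, and r a positive integer. Then T is almost automorphic (i.e., every point is almost automorphic for the T-action) if and only if T^r is almost automorphic. -/
open Filter Topology

/-- A point `x` is almost automorphic for a homeomorphism `T` if whenever
`T^{kᵢ}(x) → y` along a sequence of integers `kᵢ`, one has `T^{-kᵢ}(y) → x`. -/
def IsAlmostAutomorphicPt {X : Type*} [TopologicalSpace X] (T : X ≃ₜ X) (x : X) : Prop :=
  ∀ (y : X) (k : ℕ → ℤ), Tendsto (fun i => (T.toEquiv ^ (k i)) x) atTop (𝓝 y) →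
    Tendsto (fun i => (T.toEquiv ^ (-(k i))) y) atTop (𝓝 x)

/-- `T` is almost automorphic if every point is almost automorphic for `T`. -/
def AlmostAutomorphic {X : Type*} [TopologicalSpace X] (T : X ≃ₜ X) : Prop :=
  ∀ x : X, IsAlmostAutomorphicPt T x

/-- The `r`-th iterate of a homeomorphism, as a homeomorphism. -/
def homeoPow {X : Type*} [TopologicalSpace X] (T : X ≃ₜ X) : ℕ → X ≃ₜ X
  | 0 => Homeomorph.refl X
  | n + 1 => (homeoPow T n).trans T

lemma homeoPow_toEquiv {X : Type*} [TopologicalSpace X] (T : X ≃ₜ X) :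
    ∀ n : ℕ, (homeoPow T n).toEquiv = T.toEquiv ^ n
  | 0 => rfl
  | n + 1 => by
    show (homeoPow T n).toEquiv.trans T.toEquiv = _
    rw [homeoPow_toEquiv T n]
    ext x
    simp [pow_succ', Equiv.Perm.mul_apply]

lemma homeoPow_zpow {X : Type*} [TopologicalSpace X] (T : X ≃ₜ X) (r : ℕ) (m : ℤ) :
    (homeoPow T r).toEquiv ^ m = T.toEquiv ^ ((r : ℤ) * m) := by
  rw [homeoPow_toEquiv, ← zpow_natCast, ← zpow_mul]

lemma continuous_equiv_pow {X : Type*} [TopologicalSpace X] (T : X ≃ₜ X) :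
    ∀ n : ℕ, Continuous ⇑(T.toEquiv ^ n)
  | 0 => by simpa using continuous_id
  | n + 1 => by
    have : ⇑(T.toEquiv ^ (n+1)) = ⇑(T.toEquiv ^ n) ∘ ⇑T := by
      ext x; simp [pow_succ, Equiv.Perm.mul_apply]
    rw [this]
    exact (continuous_equiv_pow T n).comp T.continuous

lemma continuous_equiv_zpow {X : Type*} [TopologicalSpace X] (T : X ≃ₜ X) :
    ∀ m : ℤ, Continuous ⇑(T.toEquiv ^ m)
  | Int.ofNat n => by rw [Int.ofNat_eq_natCast, zpow_natCast]; exact continuous_equiv_pow T n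
  | Int.negSucc n => by
    rw [zpow_negSucc, ← inv_pow]
    have : T.toEquiv⁻¹ = T.symm.toEquiv := rfl
    rw [this]
    exact continuous_equiv_pow T.symm (n+1)

lemma zpow_apply_apply {X : Type*} [TopologicalSpace X] (T : X ≃ₜ X) (a b : ℤ) (p : X) :
    (T.toEquiv ^ a) ((T.toEquiv ^ b) p) = (T.toEquiv ^ (a + b)) p := by
  simp [zpow_add, Equiv.Perm.mul_apply]

theorem almostAutomorphic_iff_pow {X : Type*} [MetricSpace X] [CompactSpace X]
    (T : X ≃ₜ X) (r : ℕ) (hr : 0 < r) :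
    AlmostAutomorphic T ↔ AlmostAutomorphic (homeoPow T r) := by
  constructor
  · intro h x y k hk
    simp only [homeoPow_zpow] at hk ⊢
    have := h x y (fun i => (r : ℤ) * k i) hk
    simpa [mul_neg] using this
  · intro h x y k hk
    apply tendsto_of_subseq_tendsto
    intro ns hns
    -- pigeonhole on residues mod r
    have hr0 : (r : ℤ) ≠ 0 := by exact_mod_cast hr.ne'
    have hrpos : (0 : ℤ) < r := by exact_mod_cast hr
    set f : ℕ → Fin r := fun i => ⟨(k (ns i) % (r : ℤ)).toNat, by
      have h1 := Int.emod_nonneg (k (ns i)) hr0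
      have h2 := Int.emod_lt_of_pos (k (ns i)) hrpos
      omega⟩ with hf
    obtain ⟨s, hs⟩ := Finite.exists_infinite_fiber f
    have hs' : (f ⁻¹' {s}).Infinite := Set.infinite_coe_iff.mp hs
    have hfreq : ∃ᶠ n in atTop, f n = s := by
      rw [Nat.frequently_atTop_iff_infinite]
      exact hs'
    obtain ⟨φ, hφ, hφs⟩ := extraction_of_frequently_atTop hfreq
    refine ⟨φ, ?_⟩
    set m : ℕ → ℤ := fun i => k (ns (φ i)) with hm
    have hmod : ∀ i, m i % (r : ℤ) = (s.1 : ℤ) := by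
      intro i
      have hv : (k (ns (φ i)) % (r : ℤ)).toNat = s.1 := congrArg Fin.val (hφs i)
      have h1 := Int.emod_nonneg (k (ns (φ i))) hr0
      show k (ns (φ i)) % (r : ℤ) = (s.1 : ℤ)
      omega
    set sv : ℤ := (s.1 : ℤ) with hsv
    set q : ℕ → ℤ := fun i => m i / (r : ℤ) with hq
    have hdecomp : ∀ i, m i = (r : ℤ) * q i + sv := by
      intro i
      have h := Int.mul_ediv_add_emod (m i) (r : ℤ)
      rw [hmod i] at h
      exact h.symm
    have hk' : Tendsto (fun i => (T.toEquiv ^ m i) x) atTop (𝓝 y) :=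
      hk.comp (hns.comp hφ.tendsto_atTop)
    set z : X := (T.toEquiv ^ (-sv)) y with hz
    have hz' : Tendsto (fun i => (T.toEquiv ^ ((r : ℤ) * q i)) x) atTop (𝓝 z) := by
      have := ((continuous_equiv_zpow T (-sv)).tendsto y).comp hk'
      refine this.congr fun i => ?_
      rw [Function.comp_apply, zpow_apply_apply]
      congr 1
      rw [hdecomp i]; ring
    have hAA := h x z q
    simp only [homeoPow_zpow] at hAA
    have := hAA hz'
    refine this.congr fun i => ?_
    rw [hz, zpow_apply_apply]
    have he : (r : ℤ) * -q i + -sv = -(k (ns (φ i))) := by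
      rw [show k (ns (φ i)) = m i from rfl, hdecomp i]; ring
    rw [he]
end

section
/- Let X be a compact metric space and φ : X → X a homeomorphism admitting a convergent trajectory, i.e., there exists x ∈ X with φ(x) ≠ x such that either (φ^k(x))_{k≥0} or (φ^{-k}(x))_{k≥0} converges. Then φ is not almost automorphic. -/
open Filter Topology

/-!
The limit `y` of a convergent half-orbit of `x` is a fixed point, so the return orbit
`φ^{-kᵢ}(y)` demanded by almost automorphy of `x` is constantly `y`; hence `x = y` is fixed.
-/

open Function

namespace IsAlmostAutomorphicPt

variable {X : Type*} [TopologicalSpace X] [T2Space X] {T : X ≃ₜ X} {x y : X}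

theorem eq_of_tendsto_zpow_of_isFixedPt (hx : IsAlmostAutomorphicPt T x) {k : ℕ → ℤ}
    (hk : Tendsto (fun i => (T.toEquiv ^ k i) x) atTop (𝓝 y)) (hy : IsFixedPt T y) :
    x = y := by
  have hconst : (fun i => (T.toEquiv ^ (-k i)) y) = fun _ => y :=
    funext fun i => (show IsFixedPt T.toEquiv y from hy).perm_zpow _
  have hback := hx y k hk
  rw [hconst] at hback
  exact tendsto_nhds_unique hback tendsto_const_nhds

theorem isFixedPt_of_tendsto_iterate (hx : IsAlmostAutomorphicPt T x)
    (h : Tendsto (fun n => T^[n] x) atTop (𝓝 y)) : IsFixedPt T x := by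
  have hy : IsFixedPt T y := _root_.isFixedPt_of_tendsto_iterate h T.continuous.continuousAt
  have hk : Tendsto (fun n : ℕ => (T.toEquiv ^ (n : ℤ)) x) atTop (𝓝 y) := by
    simp only [zpow_natCast, ← Equiv.Perm.iterate_eq_pow]
    exact h
  rwa [hx.eq_of_tendsto_zpow_of_isFixedPt hk hy]

theorem isFixedPt_of_tendsto_iterate_symm (hx : IsAlmostAutomorphicPt T x)
    (h : Tendsto (fun n => T.symm^[n] x) atTop (𝓝 y)) : IsFixedPt T x := by
  have hy : IsFixedPt T y :=
    (_root_.isFixedPt_of_tendsto_iterate h T.symm.continuous.continuousAt).equiv_symm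
  have hk : Tendsto (fun n : ℕ => (T.toEquiv ^ (-n : ℤ)) x) atTop (𝓝 y) := by
    simp only [zpow_neg, zpow_natCast, ← inv_pow, ← Equiv.Perm.iterate_eq_pow]
    exact h
  rwa [hx.eq_of_tendsto_zpow_of_isFixedPt hk hy]

end IsAlmostAutomorphicPt

theorem not_almostAutomorphic_of_convergent_trajectory_general {X : Type*} [MetricSpace X]
    (φ : X ≃ₜ X)
    (h : ∃ x : X, φ x ≠ x ∧ ((∃ y, Tendsto (fun k : ℕ => φ^[k] x) atTop (𝓝 y)) ∨
      (∃ y, Tendsto (fun k : ℕ => (φ.symm)^[k] x) atTop (𝓝 y)))) :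
    ¬ AlmostAutomorphic φ := by
  intro hAA
  obtain ⟨x, hx, ⟨y, hy⟩ | ⟨y, hy⟩⟩ := h
  · exact hx ((hAA x).isFixedPt_of_tendsto_iterate hy)
  · exact hx ((hAA x).isFixedPt_of_tendsto_iterate_symm hy)

theorem not_almostAutomorphic_of_convergent_trajectory {X : Type*} [MetricSpace X]
    [CompactSpace X] (φ : X ≃ₜ X)
    (h : ∃ x : X, φ x ≠ x ∧ ((∃ y, Tendsto (fun k : ℕ => φ^[k] x) atTop (𝓝 y)) ∨
      (∃ y, Tendsto (fun k : ℕ => (φ.symm)^[k] x) atTop (𝓝 y)))) :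
    ¬ AlmostAutomorphic φ :=
  not_almostAutomorphic_of_convergent_trajectory_general φ h
end

section
/- Let 𝔑 be a finite-dimensional nilpotent Lie algebra over a field of characteristic zero, and let f : 𝔑 → 𝔑 be a Lie algebra automorphism whose induced map on the abelianization 𝔑/[𝔑,𝔑] is unipotent. Then f itself is unipotent. -/
/-!
Write `u = f - 1` and `Cᵏ` for the lower central series. The rule
`u ⁅a, b⁆ = ⁅u a, f b⁆ + ⁅a, u b⁆` shows that `u ^ N ⁅a, b⁆` is a combination of the brackets
`⁅u ^ i a, f ^ i (u ^ j b)⁆` with `i + j = N`, and all `Cᵏ` are stable under `f` and `u`.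
So if `u ^ n` maps `L` into `C¹` and `u ^ m` maps `Cᵏ` into `Cᵏ⁺¹`, then in every such bracket
with `N = n + m` either `i ≥ n` or `j ≥ m`, and `u ^ (n + m)` maps `Cᵏ⁺¹ = ⁅L, Cᵏ⁆` into
`⁅C¹, Cᵏ⁆ + ⁅L, Cᵏ⁺¹⁆ ⊆ Cᵏ⁺²`. Thus a power of `u` lowers each step of the series, which
reaches `0`.
-/

open LieModule

section

variable {R L M : Type*} [CommRing R] [LieRing L] [LieAlgebra R L]
  [AddCommGroup M] [Module R M] [LieRingModule L M] [LieModule R L M]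

theorem LieSubmodule.lie_lie_le (I J : LieIdeal R L) (N : LieSubmodule R L M) :
    ⁅⁅I, J⁆, N⁆ ≤ ⁅I, ⁅J, N⁆⁆ ⊔ ⁅J, ⁅I, N⁆⁆ := by
  rw [LieSubmodule.lie_le_iff]
  intro x hx m hm
  rw [← LieSubmodule.mem_toSubmodule, LieSubmodule.lieIdeal_oper_eq_linear_span'] at hx
  induction hx using Submodule.span_induction with
  | mem z hz =>
    obtain ⟨a, ha, b, hb, rfl⟩ := hz
    rw [lie_lie]
    exact sub_mem (LieSubmodule.mem_sup_left (lie_mem_lie ha (lie_mem_lie hb hm)))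
      (LieSubmodule.mem_sup_right (lie_mem_lie hb (lie_mem_lie ha hm)))
  | zero => rw [zero_lie]; exact zero_mem _
  | add y z _ _ hy hz => rw [add_lie]; exact add_mem hy hz
  | smul t y _ hy => rw [smul_lie]; exact SMulMemClass.smul_mem t hy

theorem LieModule.lie_lowerCentralSeries_one_le (k : ℕ) :
    ⁅lowerCentralSeries R L L 1, lowerCentralSeries R L M k⁆ ≤
      lowerCentralSeries R L M (k + 2) := by
  simpa only [lowerCentralSeries_succ, lowerCentralSeries_zero, sup_idem] using
    LieSubmodule.lie_lie_le (⊤ : LieIdeal R L) ⊤ (lowerCentralSeries R L M k)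

namespace LieHom

variable (g : L →ₗ⁅R⁆ L)

theorem mapsTo_lowerCentralSeries (k : ℕ) :
    Set.MapsTo g (lowerCentralSeries R L L k) (lowerCentralSeries R L L k) :=
  fun _ hx => LieIdeal.map_lowerCentralSeries_le k (LieIdeal.mem_map hx)

theorem mapsTo_sub_one_lowerCentralSeries (k : ℕ) :
    Set.MapsTo ⇑((g : Module.End R L) - 1) (lowerCentralSeries R L L k)
      (lowerCentralSeries R L L k) :=
  fun _ hx => sub_mem (g.mapsTo_lowerCentralSeries k hx) hx

theorem sub_one_lie (a b : L) :
    ((g : Module.End R L) - 1) ⁅a, b⁆ =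
      ⁅((g : Module.End R L) - 1) a, g b⁆ + ⁅a, ((g : Module.End R L) - 1) b⁆ := by
  simp only [LinearMap.sub_apply, Module.End.one_apply, coe_toLinearMap, map_lie, sub_lie,
    lie_sub]
  abel

theorem pow_sub_one_lie_mem {S : Submodule R L} (N : ℕ) {a b : L}
    (h : ∀ i j, i + j = N →
      ⁅(((g : Module.End R L) - 1) ^ i) a,
        ((g : Module.End R L) ^ i) ((((g : Module.End R L) - 1) ^ j) b)⁆ ∈ S) :
    (((g : Module.End R L) - 1) ^ N) ⁅a, b⁆ ∈ S := by
  set G : Module.End R L := g.toLinearMap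
  have hGu : Commute G (G - 1) := (Commute.refl G).sub_right (Commute.one_right G)
  induction N generalizing a b with
  | zero => simpa using h 0 0 rfl
  | succ N ih =>
    rw [pow_succ, Module.End.mul_apply, sub_one_lie, map_add]
    refine S.add_mem (ih fun i j hij => ?_) (ih fun i j hij => ?_)
    · change ⁅_, (G ^ i) (((G - 1) ^ j) (G b))⁆ ∈ S
      rw [← Module.End.mul_apply _ (G - 1), ← pow_succ, ← Module.End.mul_apply ((G - 1) ^ j),
        ← (hGu.pow_right j).eq, Module.End.mul_apply, ← Module.End.mul_apply (G ^ i), ← pow_succ]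
      exact h (i + 1) j (by omega)
    · rw [← Module.End.mul_apply _ (G - 1), ← pow_succ]
      exact h i (j + 1) (by omega)

theorem mapsTo_pow_sub_one_lowerCentralSeries_succ {n m k : ℕ}
    (hn : Set.MapsTo ⇑(((g : Module.End R L) - 1) ^ n) (lowerCentralSeries R L L 0)
      (lowerCentralSeries R L L 1))
    (hm : Set.MapsTo ⇑(((g : Module.End R L) - 1) ^ m) (lowerCentralSeries R L L k)
      (lowerCentralSeries R L L (k + 1))) :
    Set.MapsTo ⇑(((g : Module.End R L) - 1) ^ (n + m)) (lowerCentralSeries R L L (k + 1))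
      (lowerCentralSeries R L L (k + 2)) := by
  set G : Module.End R L := g.toLinearMap
  have hpow {φ : Module.End R L} {j : ℕ}
      (hφ : Set.MapsTo φ (lowerCentralSeries R L L j) (lowerCentralSeries R L L j)) (i : ℕ) :
      Set.MapsTo ⇑(φ ^ i) (lowerCentralSeries R L L j) (lowerCentralSeries R L L j) := by
    rw [Module.End.coe_pow]
    exact hφ.iterate i
  suffices (lowerCentralSeries R L L (k + 1)).toSubmodule ≤
      (lowerCentralSeries R L L (k + 2)).toSubmodule.comap ((G - 1) ^ (n + m)) from
    fun x hx => this hx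
  rw [lowerCentralSeries_succ, LieSubmodule.lieIdeal_oper_eq_linear_span', Submodule.span_le]
  rintro _ ⟨a, -, b, hb, rfl⟩
  refine g.pow_sub_one_lie_mem (n + m) fun i j hij => ?_
  rcases le_or_gt n i with hi | hi
  · obtain ⟨i, rfl⟩ := Nat.exists_eq_add_of_le hi
    have ha : ((G - 1) ^ (n + i)) a ∈ lowerCentralSeries R L L 1 := by
      rw [add_comm n i, pow_add, Module.End.mul_apply]
      exact hpow (g.mapsTo_sub_one_lowerCentralSeries 1) i (hn (LieSubmodule.mem_top a))
    have hb' : (G ^ (n + i)) (((G - 1) ^ j) b) ∈ lowerCentralSeries R L L k :=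
      hpow (g.mapsTo_lowerCentralSeries k) _ (hpow (g.mapsTo_sub_one_lowerCentralSeries k) j hb)
    exact lie_lowerCentralSeries_one_le k (LieSubmodule.lie_mem_lie ha hb')
  · obtain ⟨j, rfl⟩ := Nat.exists_eq_add_of_le (show m ≤ j by omega)
    have hb' : (G ^ i) (((G - 1) ^ (m + j)) b) ∈ lowerCentralSeries R L L (k + 1) := by
      rw [add_comm m j, pow_add, Module.End.mul_apply]
      exact hpow (g.mapsTo_lowerCentralSeries _) i
        (hpow (g.mapsTo_sub_one_lowerCentralSeries _) j (hm hb))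
    show _ ∈ lowerCentralSeries R L L (k + 2)
    rw [lowerCentralSeries_succ]
    exact LieSubmodule.lie_mem_lie (LieSubmodule.mem_top _) hb'

end LieHom

end

theorem Module.End.isNilpotent_of_mapsTo_pow {R M : Type*} [Semiring R] [AddCommMonoid M]
    [Module R M] (u : Module.End R M) {C : ℕ → Submodule R M} (h0 : C 0 = ⊤) {N : ℕ}
    (hN : C N = ⊥) (hC : ∀ k, ∃ m, Set.MapsTo ⇑(u ^ m) (C k) (C (k + 1))) :
    IsNilpotent u := by
  have hmaps : ∀ k, ∃ m, Set.MapsTo ⇑(u ^ m) (C 0) (C k) := by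
    intro k
    induction k with
    | zero => exact ⟨0, fun x hx => by simpa using hx⟩
    | succ k ih =>
      obtain ⟨m, hm⟩ := ih
      obtain ⟨m', hm'⟩ := hC k
      exact ⟨m' + m, by rw [pow_add, Module.End.coe_mul]; exact hm'.comp hm⟩
  obtain ⟨m, hm⟩ := hmaps N
  refine ⟨m, LinearMap.ext fun x => ?_⟩
  simpa [hN] using hm (show x ∈ C 0 by simp [h0])

theorem unipotent_of_unipotent_on_abelianization_general {K : Type*} [Field K]
    {L : Type*} [LieRing L] [LieAlgebra K L]
    [LieRing.IsNilpotent L] (f : L ≃ₗ⁅K⁆ L)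
    (h : ∃ n : ℕ, ∀ x : L,
      (((f.toLieHom.toLinearMap - LinearMap.id : Module.End K L)) ^ n) x ∈
        ⁅(⊤ : LieIdeal K L), (⊤ : LieIdeal K L)⁆) :
    IsNilpotent (f.toLieHom.toLinearMap - LinearMap.id : Module.End K L) := by
  obtain ⟨n, hn⟩ := h
  have hstep : ∀ k, ∃ m, Set.MapsTo ⇑((f.toLieHom.toLinearMap - 1 : Module.End K L) ^ m)
      (lowerCentralSeries K L L k) (lowerCentralSeries K L L (k + 1)) := by
    intro k
    induction k with
    | zero => exact ⟨n, fun x _ => hn x⟩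
    | succ k ih =>
      obtain ⟨m, hm⟩ := ih
      exact ⟨n + m, f.toLieHom.mapsTo_pow_sub_one_lowerCentralSeries_succ (fun x _ => hn x) hm⟩
  obtain ⟨N, hN⟩ := LieModule.IsNilpotent.nilpotent K L L
  exact Module.End.isNilpotent_of_mapsTo_pow _
    (C := fun k => (lowerCentralSeries K L L k).toSubmodule) (by simp) (N := N) (by simp [hN])
    hstep

/-- An automorphism of a finite-dimensional nilpotent Lie algebra (over a field of
characteristic zero) inducing a unipotent map on the abelianization is itself unipotent. -/
theorem unipotent_of_unipotent_on_abelianization {K : Type*} [Field K] [CharZero K]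
    {L : Type*} [LieRing L] [LieAlgebra K L] [FiniteDimensional K L]
    [LieRing.IsNilpotent L] (f : L ≃ₗ⁅K⁆ L)
    (h : ∃ n : ℕ, ∀ x : L,
      (((f.toLieHom.toLinearMap - LinearMap.id : Module.End K L)) ^ n) x ∈
        ⁅(⊤ : LieIdeal K L), (⊤ : LieIdeal K L)⁆) :
    IsNilpotent (f.toLieHom.toLinearMap - LinearMap.id : Module.End K L) :=
  unipotent_of_unipotent_on_abelianization_general f h
end

section
/- Let T : ℝ^d/ℤ^d → ℝ^d/ℤ^d be the affine automorphism T(x) = a + U(x), where a ∈ ℝ^d/ℤ^d and U is induced by a matrix Ũ ∈ GL(d, ℤ) satisfying (Ũ − I)^2 = 0 and Ũ(ã) = ã for a lift ã of a. Then T is almost automorphic: for every x, y ∈ ℝ^d/ℤ^d and every integer sequence (kᵢ) with T^{kᵢ}(x) → y, one has T^{-kᵢ}(y) → x. -/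
open Filter Topology

/-- The integer lattice `ℤ^d` inside `ℝ^d`. -/
def intLattice (d : ℕ) : AddSubgroup (Fin d → ℝ) :=
  AddSubgroup.pi Set.univ fun _ => AddSubgroup.zmultiples (1 : ℝ)

/-- The torus `ℝ^d / ℤ^d`. -/
abbrev Torus (d : ℕ) := (Fin d → ℝ) ⧸ intLattice d

/-!
Write `U = 1 + N`. Since `N² = 0` and `N a = 0`, the vector `v x = a + N x` is killed by `N`,
so it is constant along orbits and `Tᵏ x = x + k • v x` for all `k : ℤ`. If `Tᵏⁱ x → y`, then
continuity of `v` gives `v y = v x`, hence `T⁻ᵏⁱ y = y - kᵢ • v x = y - (Tᵏⁱ x - x) → x`.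
-/

theorem Equiv.Perm.zpow_apply_eq_add_zsmul {G : Type*} [AddCommGroup G] (T : Equiv.Perm G)
    (v : G → G) (hT : ∀ x, T x = x + v x) (hv : ∀ x (c : ℤ), v (x + c • v x) = v x)
    (c : ℤ) (x : G) : (T ^ c) x = x + c • v x := by
  induction c using Int.induction_on with
  | zero => simp
  | succ n ih =>
    rw [add_comm, zpow_add, zpow_one, Equiv.Perm.mul_apply, ih, hT, hv, add_zsmul, one_zsmul]
    abel
  | pred n ih =>
    rw [sub_eq_neg_add, zpow_add, zpow_neg_one, Equiv.Perm.mul_apply, ih,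
      Equiv.Perm.inv_eq_iff_eq, hT, hv, add_zsmul, neg_one_zsmul]
    abel

theorem almostAutomorphic_of_apply_eq_add {X : Type*} [TopologicalSpace X] [AddCommGroup X]
    [IsTopologicalAddGroup X] [T2Space X] (T : X ≃ₜ X) (v : X → X) (hv_cont : Continuous v)
    (hT : ∀ x, T x = x + v x) (hv : ∀ x (c : ℤ), v (x + c • v x) = v x) :
    AlmostAutomorphic T := by
  have hpow := Equiv.Perm.zpow_apply_eq_add_zsmul T.toEquiv v hT hv
  intro x y k hxy
  have hvy : v y = v x :=
    tendsto_nhds_unique ((hv_cont.tendsto y).comp hxy) (by simp [Function.comp_def, hpow, hv])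
  have hback : ∀ i, (T.toEquiv ^ (-k i)) y = y - (T.toEquiv ^ k i) x + x := by
    intro i
    rw [hpow, hpow, hvy, neg_zsmul]
    abel
  simp only [hback]
  simpa using ((tendsto_const_nhds (x := y)).sub hxy).add (tendsto_const_nhds (x := x))

theorem almostAutomorphic_affine_of_sq_eq_zero {X : Type*} [TopologicalSpace X]
    [AddCommGroup X] [IsTopologicalAddGroup X] [T2Space X] (T : X ≃ₜ X) (a : X) (N : X →+ X)
    (hN : Continuous N) (hNN : ∀ x, N (N x) = 0) (ha : N a = 0) (hT : ∀ x, T x = a + x + N x) :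
    AlmostAutomorphic T :=
  almostAutomorphic_of_apply_eq_add T (fun x => a + N x) (continuous_const.add hN)
    (fun x => by rw [hT]; abel)
    (fun x c => by simp only [map_add, map_zsmul, ha, hNN, add_zero, smul_zero])

theorem mem_intLattice {d : ℕ} {x : Fin d → ℝ} :
    x ∈ intLattice d ↔ ∀ i, ∃ n : ℤ, (n : ℝ) = x i := by
  simp [intLattice, AddSubgroup.mem_pi, AddSubgroup.mem_zmultiples_iff]

instance isClosed_intLattice (d : ℕ) : IsClosed (intLattice d : Set (Fin d → ℝ)) := by
  have : (intLattice d : Set (Fin d → ℝ)) = Set.univ.pi fun _ => Set.range ((↑) : ℤ → ℝ) := by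
    ext x
    simp [mem_intLattice]
  rw [this]
  exact isClosed_set_pi fun _ _ => Int.isClosedEmbedding_coe_real.isClosed_range

theorem mulVec_mem_intLattice {d : ℕ} (M : Matrix (Fin d) (Fin d) ℤ) {x : Fin d → ℝ}
    (hx : x ∈ intLattice d) : (M.map (Int.cast : ℤ → ℝ)).mulVec x ∈ intLattice d := by
  choose n hn using mem_intLattice.mp hx
  obtain rfl : (fun i => (n i : ℝ)) = x := funext hn
  exact mem_intLattice.mpr fun j => ⟨M.mulVec n j, RingHom.map_mulVec (Int.castRingHom ℝ) M n j⟩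

namespace Torus

variable {d : ℕ}

noncomputable def matrixMap (M : Matrix (Fin d) (Fin d) ℤ) : Torus d →+ Torus d :=
  QuotientAddGroup.map _ _ (M.map (Int.cast : ℤ → ℝ)).mulVecLin.toAddMonoidHom
    fun _ hx => mulVec_mem_intLattice M hx

theorem matrixMap_mk (M : Matrix (Fin d) (Fin d) ℤ) (x : Fin d → ℝ) :
    matrixMap M (QuotientAddGroup.mk x) =
      QuotientAddGroup.mk ((M.map (Int.cast : ℤ → ℝ)).mulVec x) :=
  rfl

theorem continuous_matrixMap (M : Matrix (Fin d) (Fin d) ℤ) : Continuous (matrixMap M) :=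
  (QuotientAddGroup.isQuotientMap_mk _).continuous_iff.mpr <|
    continuous_quot_mk.comp (M.map (Int.cast : ℤ → ℝ)).mulVecLin.continuous_of_finiteDimensional

theorem matrixMap_matrixMap (M M' : Matrix (Fin d) (Fin d) ℤ) (x : Torus d) :
    matrixMap M (matrixMap M' x) = matrixMap (M * M') x := by
  induction x using QuotientAddGroup.induction_on
  have hmul : (M * M').map (Int.cast : ℤ → ℝ) = M.map Int.cast * M'.map Int.cast :=
    Matrix.map_mul (f := Int.castRingHom ℝ)
  rw [matrixMap_mk, matrixMap_mk, matrixMap_mk, Matrix.mulVec_mulVec, hmul]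

theorem matrixMap_sub_one_mk (M : Matrix (Fin d) (Fin d) ℤ) (x : Fin d → ℝ) :
    matrixMap (M - 1) (QuotientAddGroup.mk x) =
      QuotientAddGroup.mk ((M.map (Int.cast : ℤ → ℝ)).mulVec x - x) := by
  have hmap : (M - 1).map (Int.cast : ℤ → ℝ) = M.map Int.cast - 1 := by
    rw [Matrix.map_sub _ Int.cast_sub, Matrix.map_one _ Int.cast_zero Int.cast_one]
  rw [matrixMap_mk, hmap, Matrix.sub_mulVec, Matrix.one_mulVec]

end Torus

theorem affine_unipotent_nilrank_one_almost_automorphic_general {d : ℕ}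
    (U : Matrix (Fin d) (Fin d) ℤ)
    (hU2 : (U - 1) ^ 2 = 0) (a : Fin d → ℝ)
    (hfix : (U.map (Int.cast : ℤ → ℝ)).mulVec a = a)
    (T : Torus d ≃ₜ Torus d)
    (hT : ∀ x : Fin d → ℝ,
      T (QuotientAddGroup.mk x) = QuotientAddGroup.mk (a + (U.map (Int.cast : ℤ → ℝ)).mulVec x)) :
    AlmostAutomorphic T := by
  refine almostAutomorphic_affine_of_sq_eq_zero T (QuotientAddGroup.mk a)
    (Torus.matrixMap (U - 1)) (Torus.continuous_matrixMap _) (fun x => ?_) ?_ fun x => ?_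
  · rw [Torus.matrixMap_matrixMap, ← sq, hU2]
    induction x using QuotientAddGroup.induction_on
    simp [Torus.matrixMap_mk]
  · rw [Torus.matrixMap_sub_one_mk, hfix, sub_self, QuotientAddGroup.mk_zero]
  · induction x using QuotientAddGroup.induction_on with | H x => ?_
    rw [hT, Torus.matrixMap_sub_one_mk, QuotientAddGroup.mk_add, QuotientAddGroup.mk_sub]
    abel

theorem affine_unipotent_nilrank_one_almost_automorphic {d : ℕ}
    (U : Matrix (Fin d) (Fin d) ℤ) (hdet : U.det = 1 ∨ U.det = -1)
    (hU2 : (U - 1) ^ 2 = 0) (a : Fin d → ℝ)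
    (hfix : (U.map (Int.cast : ℤ → ℝ)).mulVec a = a)
    (T : Torus d ≃ₜ Torus d)
    (hT : ∀ x : Fin d → ℝ,
      T (QuotientAddGroup.mk x) = QuotientAddGroup.mk (a + (U.map (Int.cast : ℤ → ℝ)).mulVec x)) :
    AlmostAutomorphic T :=
  affine_unipotent_nilrank_one_almost_automorphic_general U hU2 a hfix T hT
end

section
/- Let N be a topological group, Γ a discrete subgroup, and P a closed subgroup such that P ∩ Γ is cocompact in P (i.e., P/(P ∩ Γ) is compact). Then PΓ is a closed subset of N. -/
open Pointwise Set

/-!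
Since `P` is locally compact and `P/(P ∩ Γ)` is compact, finitely many compact neighbourhoods in
`P` already map onto the quotient, so `P ⊆ KΓ` for a compact `K ⊆ P`. Hence `PΓ = KΓ`, the product
of a compact set and the closed (because discrete) subgroup `Γ`, which is closed.
-/

theorem IsOpenMap.exists_isCompact_image_eq_univ {X Y : Type*} [TopologicalSpace X]
    [TopologicalSpace Y] [LocallyCompactSpace X] [CompactSpace Y] {f : X → Y}
    (hf : IsOpenMap f) (hsurj : Function.Surjective f) :
    ∃ K : Set X, IsCompact K ∧ f '' K = univ := by
  choose L hLc hLx using fun x : X => exists_compact_mem_nhds x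
  obtain ⟨s, hs⟩ := isCompact_univ.elim_finite_subcover (fun x => f '' interior (L x))
    (fun x => hf _ isOpen_interior) fun y _ => by
      obtain ⟨x, rfl⟩ := hsurj y
      exact mem_iUnion.2 ⟨x, mem_image_of_mem f (mem_interior_iff_mem_nhds.2 (hLx x))⟩
  refine ⟨⋃ x ∈ s, L x, s.isCompact_biUnion fun x _ => hLc x, eq_univ_of_univ_subset ?_⟩
  refine hs.trans (iUnion₂_subset fun x hx => image_mono (interior_subset.trans ?_))
  exact subset_biUnion_of_mem (u := L) hx

theorem QuotientGroup.exists_isCompact_mul_eq_univ {G : Type*} [Group G] [TopologicalSpace G]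
    [IsTopologicalGroup G] [LocallyCompactSpace G] (H : Subgroup G) [CompactSpace (G ⧸ H)] :
    ∃ K : Set G, IsCompact K ∧ K * (H : Set G) = univ := by
  obtain ⟨K, hK, hKH⟩ := (QuotientGroup.isOpenMap_coe (N := H)).exists_isCompact_image_eq_univ
    QuotientGroup.mk_surjective
  refine ⟨K, hK, eq_univ_of_forall fun g => ?_⟩
  obtain ⟨k, hk, hkg⟩ := hKH.symm ▸ mem_univ (g : G ⧸ H)
  exact ⟨k, hk, k⁻¹ * g, QuotientGroup.eq.1 hkg, mul_inv_cancel_left k g⟩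

theorem Subgroup.exists_isCompact_subset_mul_of_compactSpace_quotient {G : Type*} [Group G]
    [TopologicalSpace G] [IsTopologicalGroup G] (P Γ : Subgroup G) [LocallyCompactSpace P]
    [CompactSpace (P ⧸ Γ.subgroupOf P)] :
    ∃ K : Set G, IsCompact K ∧ K ⊆ P ∧ (P : Set G) ⊆ K * Γ := by
  obtain ⟨K, hK, hKΓ⟩ := QuotientGroup.exists_isCompact_mul_eq_univ (Γ.subgroupOf P)
  refine ⟨(↑) '' K, hK.image continuous_subtype_val, fun _ ⟨p, _, hp⟩ => hp ▸ p.2, fun g hg => ?_⟩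
  obtain ⟨k, hk, γ, hγ, hkγ⟩ := hKΓ.symm ▸ mem_univ (⟨g, hg⟩ : P)
  exact ⟨k, mem_image_of_mem _ hk, γ, hγ, congrArg Subtype.val hkγ⟩

theorem Set.mul_subgroup_eq_of_subset_mul {G : Type*} [Group G] {K S : Set G} (Γ : Subgroup G)
    (hKS : K ⊆ S) (hSK : S ⊆ K * Γ) : S * Γ = K * Γ := by
  refine (Set.mul_subset_mul_right hKS).antisymm' ?_
  calc S * Γ ⊆ K * Γ * Γ := Set.mul_subset_mul_right hSK
    _ = K * Γ := by rw [mul_assoc, coe_mul_coe]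

theorem mul_closed_of_cocompact_intersection_general {N : Type*} [Group N] [TopologicalSpace N]
    [IsTopologicalGroup N] [LocallyCompactSpace N] [T2Space N]
    (Γ P : Subgroup N) (hΓ : DiscreteTopology Γ) (hP : IsClosed (P : Set N))
    (hcocpt : CompactSpace (P ⧸ Γ.subgroupOf P)) :
    IsClosed ((P : Set N) * (Γ : Set N)) := by
  have : LocallyCompactSpace P := hP.locallyCompactSpace
  have := hcocpt
  obtain ⟨K, hK, hKP, hPK⟩ := P.exists_isCompact_subset_mul_of_compactSpace_quotient Γ
  rw [Set.mul_subgroup_eq_of_subset_mul Γ hKP hPK]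
  exact Subgroup.isClosed_of_discrete.mul_left_of_isCompact hK

/-- If `Γ` is a discrete subgroup of a locally compact second countable Hausdorff
topological group `N`, and `P` is a closed subgroup such that `P/(P ∩ Γ)` is compact,
then `PΓ` is closed in `N`. -/
theorem mul_closed_of_cocompact_intersection {N : Type*} [Group N] [TopologicalSpace N]
    [IsTopologicalGroup N] [LocallyCompactSpace N] [T2Space N] [SecondCountableTopology N]
    (Γ P : Subgroup N) (hΓ : DiscreteTopology Γ) (hP : IsClosed (P : Set N))
    (hcocpt : CompactSpace (P ⧸ Γ.subgroupOf P)) :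
    IsClosed ((P : Set N) * (Γ : Set N)) :=
  mul_closed_of_cocompact_intersection_general Γ P hΓ hP hcocpt
end
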